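/- arXiv:2205.11971 — 2 statements merged into one kernel-verified Lean document; each statement's English description precedes it below -/
import Mathlib

section
/- In the complex Clifford algebra Cl_n with orthonormal generators α₁,…,αₙ (αᵢ² = 1, αᵢαⱼ = −αⱼαᵢ for i≠j), the elements eᵢ = (1 + αᵢα_{i+1})/√2 for i = 1,…,n−1 satisfy the braid relations: eᵢe_{i+1}eᵢ = e_{i+1}eᵢe_{i+1}, and eᵢeⱼ = eⱼeᵢ when |i−j| > 1. -/
/-! Write `uᵢ = αᵢα_{i+1}`, so that `eᵢ = (1 + uᵢ)/√2`. Each `uᵢ` squares to `-1`, consecutive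
`uᵢ, u_{i+1}` anticommute, and `uᵢ, uⱼ` commute when `|i - j| > 1`, because each of `αⱼ, α_{j+1}`
anticommutes with both factors of `uᵢ`. For anticommuting square roots `u, v` of `-1`, expanding
gives `(1 + u)(1 + v)(1 + u) = 2(u + v)`, which is symmetric in `u` and `v`. -/

section Anticommuting

variable {A : Type*} [Ring A] {a b c : A}

theorem commute_mul_of_anticommute (hca : c * a = -(a * c)) (hcb : c * b = -(b * c)) :
    Commute c (a * b) :=
  calc c * (a * b) = -(a * (c * b)) := by rw [← mul_assoc, hca, neg_mul, mul_assoc]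
    _ = a * b * c := by rw [hcb, mul_neg, neg_neg, mul_assoc]

theorem mul_mul_self_eq_neg_one (ha : a * a = 1) (hb : b * b = 1) (hab : a * b = -(b * a)) :
    a * b * (a * b) = -1 :=
  calc a * b * (a * b) = -(b * (a * a) * b) := by
        rw [← mul_assoc, hab, neg_mul, neg_mul, mul_assoc b a a]
    _ = -1 := by rw [ha, mul_one, hb]

theorem mul_mul_anticommute (hab : a * b = -(b * a))
    (hca : c * a = -(a * c)) (hcb : c * b = -(b * c)) :
    a * b * (b * c) = -(b * c * (a * b)) :=
  have hba : b * a = -(a * b) := by rw [hab, neg_neg]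
  calc a * b * (b * c) = -(b * a * (b * c)) := by rw [hba, neg_mul, neg_neg]
    _ = -(b * (a * b * c)) := by simp only [mul_assoc]
    _ = -(b * c * (a * b)) := by rw [← (commute_mul_of_anticommute hca hcb).eq, mul_assoc]

end Anticommuting

section BraidRelation

variable {A : Type*} [Ring A] {u v : A}

theorem one_add_mul_one_add_mul_one_add (hu : u * u = -1) (huv : u * v = -(v * u)) :
    (1 + u) * (1 + v) * (1 + u) = 2 * (u + v) := by
  have hsum : u * v + v * u = 0 := by rw [huv, neg_add_cancel]
  have huvu : u * v * u = v := by rw [huv, neg_mul, mul_assoc, hu, mul_neg_one, neg_neg]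
  calc (1 + u) * (1 + v) * (1 + u)
        = 1 + u * u + 2 * u + v + (u * v + v * u) + u * v * u := by noncomm_ring
    _ = 2 * (u + v) := by rw [hu, hsum, huvu]; noncomm_ring

theorem one_add_braid (hu : u * u = -1) (hv : v * v = -1) (huv : u * v = -(v * u)) :
    (1 + u) * (1 + v) * (1 + u) = (1 + v) * (1 + u) * (1 + v) := by
  have hvu : v * u = -(u * v) := by rw [huv, neg_neg]
  rw [one_add_mul_one_add_mul_one_add hu huv, one_add_mul_one_add_mul_one_add hv hvu,
    add_comm]

end BraidRelation

/-- The Clifford Braiding Theorem of Kauffman–Lomonaco: in the complex Clifford algebra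
`Cl_n` with orthonormal generators `α₁,…,αₙ` (`αᵢ² = 1`, `αᵢαⱼ = −αⱼαᵢ` for `i ≠ j`),
the elements `eᵢ = (1 + αᵢα_{i+1})/√2` satisfy the braid relations. -/
theorem stmt5 {A : Type*} [Ring A] [Algebra ℂ A] {n : ℕ} (α : Fin n → A)
    (hsq : ∀ i, α i * α i = 1)
    (hanti : ∀ i j, i ≠ j → α i * α j = -(α j * α i)) :
    (∀ (i : ℕ) (h : i + 2 < n),
      ((Real.sqrt 2 : ℂ)⁻¹ • (1 + α ⟨i, by omega⟩ * α ⟨i + 1, by omega⟩)) *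
          ((Real.sqrt 2 : ℂ)⁻¹ • (1 + α ⟨i + 1, by omega⟩ * α ⟨i + 2, h⟩)) *
          ((Real.sqrt 2 : ℂ)⁻¹ • (1 + α ⟨i, by omega⟩ * α ⟨i + 1, by omega⟩)) =
        ((Real.sqrt 2 : ℂ)⁻¹ • (1 + α ⟨i + 1, by omega⟩ * α ⟨i + 2, h⟩)) *
          ((Real.sqrt 2 : ℂ)⁻¹ • (1 + α ⟨i, by omega⟩ * α ⟨i + 1, by omega⟩)) *
          ((Real.sqrt 2 : ℂ)⁻¹ • (1 + α ⟨i + 1, by omega⟩ * α ⟨i + 2, h⟩))) ∧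
    (∀ (i j : ℕ) (hij : i + 1 < j) (h : j + 1 < n),
      ((Real.sqrt 2 : ℂ)⁻¹ • (1 + α ⟨i, by omega⟩ * α ⟨i + 1, by omega⟩)) *
          ((Real.sqrt 2 : ℂ)⁻¹ • (1 + α ⟨j, by omega⟩ * α ⟨j + 1, h⟩)) =
        ((Real.sqrt 2 : ℂ)⁻¹ • (1 + α ⟨j, by omega⟩ * α ⟨j + 1, h⟩)) *
          ((Real.sqrt 2 : ℂ)⁻¹ • (1 + α ⟨i, by omega⟩ * α ⟨i + 1, by omega⟩))) := by
  have anti : ∀ k l : ℕ, (hk : k < n) → (hl : l < n) → k ≠ l →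
      α ⟨k, hk⟩ * α ⟨l, hl⟩ = -(α ⟨l, hl⟩ * α ⟨k, hk⟩) :=
    fun k l hk hl hkl ↦ hanti _ _ (Fin.ne_of_val_ne hkl)
  simp only [smul_mul_assoc, mul_smul_comm]
  refine ⟨fun i h ↦ ?_, fun i j hij h ↦ ?_⟩
  · rw [one_add_braid (mul_mul_self_eq_neg_one (hsq _) (hsq _) (anti _ _ _ _ (by omega)))
      (mul_mul_self_eq_neg_one (hsq _) (hsq _) (anti _ _ _ _ (by omega)))
      (mul_mul_anticommute (anti _ _ _ _ (by omega)) (anti _ _ _ _ (by omega))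
        (anti _ _ _ _ (by omega)))]
  · have hcomm : Commute (α ⟨i, by omega⟩ * α ⟨i + 1, by omega⟩)
        (α ⟨j, by omega⟩ * α ⟨j + 1, h⟩) :=
      ((commute_mul_of_anticommute (anti _ _ _ _ (by omega)) (anti _ _ _ _ (by omega))).mul_left
        (commute_mul_of_anticommute (anti _ _ _ _ (by omega)) (anti _ _ _ _ (by omega)))).symm
    rw [((Commute.one_left _).add_left ((Commute.one_right _).add_right hcomm)).eq]
end

section
/- If m/p is even, then μ(G(m,p,n)) = G(m,p,n) as subgroups of GL_n(ℂ). -/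
/-- The permutation matrix of `w`: its `l`-th column is the basis vector `x_{w(l)}`. -/
noncomputable def permM {n : ℕ} (w : Equiv.Perm (Fin n)) : Matrix (Fin n) (Fin n) ℂ :=
  Matrix.of fun k l => if w l = k then (1 : ℂ) else 0

/-- The complex reflection group `G(m,p,n) = Sₙ ⋉ T(m,p,n)` as a set of matrices. -/
noncomputable def Gmpn (m p n : ℕ) : Set (Matrix (Fin n) (Fin n) ℂ) :=
  {M | ∃ (w : Equiv.Perm (Fin n)) (d : Fin n → ℂ),
    (∀ i, d i ^ m = 1) ∧ (∏ i, d i) ^ (m / p) = 1 ∧ M = permM w * Matrix.diagonal d}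

/-- The mystic reflection group `μ(G(m,p,n))` as a set of matrices. -/
noncomputable def muG (m p n : ℕ) : Set (Matrix (Fin n) (Fin n) ℂ) :=
  {M | ∃ (w : Equiv.Perm (Fin n)) (d : Fin n → ℂ),
    (∀ i, d i ^ m = 1) ∧ M = permM w * Matrix.diagonal d ∧ M.det ^ (m / p) = 1}

/-! The determinant of `permM w * diagonal d` is `sign w * ∏ d i`, and the sign disappears
in any even power; so the determinant condition of `μ(G(m,p,n))` and the product condition
of `G(m,p,n)` coincide once `m / p` is even. -/

lemma permM_eq_permMatrix_inv {n : ℕ} (w : Equiv.Perm (Fin n)) :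
    permM w = w⁻¹.permMatrix ℂ := by
  ext k l
  simp only [permM, Matrix.of_apply, Equiv.Perm.permMatrix, PEquiv.toMatrix,
    Equiv.toPEquiv_apply, Option.mem_def, Option.some.injEq]
  simp [eq_comm, Equiv.eq_symm_apply, Equiv.Perm.inv_def]

lemma det_permM {n : ℕ} (w : Equiv.Perm (Fin n)) :
    (permM w).det = (Equiv.Perm.sign w : ℂ) := by
  rw [permM_eq_permMatrix_inv, Matrix.det_permutation, Equiv.Perm.sign_inv]

lemma det_permM_mul_diagonal_pow_of_even {n k : ℕ} (hk : Even k) (w : Equiv.Perm (Fin n))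
    (d : Fin n → ℂ) :
    (permM w * Matrix.diagonal d).det ^ k = (∏ i, d i) ^ k := by
  obtain ⟨j, rfl⟩ := hk.two_dvd
  have sign_sq : ((Equiv.Perm.sign w : ℤ) : ℂ) ^ 2 = 1 := by
    rw [← Int.cast_pow, ← Units.val_pow_eq_pow_val, Int.units_sq, Units.val_one, Int.cast_one]
  rw [Matrix.det_mul, det_permM, Matrix.det_diagonal, mul_pow, pow_mul, sign_sq, one_pow,
    one_mul]

theorem stmt12_general (m p n : ℕ)
    (heven : Even (m / p)) :
    muG m p n = Gmpn m p n := by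
  ext M
  constructor
  · rintro ⟨w, d, hd, rfl, hdet⟩
    exact ⟨w, d, hd, det_permM_mul_diagonal_pow_of_even heven w d ▸ hdet, rfl⟩
  · rintro ⟨w, d, hd, hprod, rfl⟩
    exact ⟨w, d, hd, rfl, (det_permM_mul_diagonal_pow_of_even heven w d).symm ▸ hprod⟩

/-- If `m/p` is even then `μ(G(m,p,n)) = G(m,p,n)` as subgroups of `GLₙ(ℂ)`. -/
theorem stmt12 (m p n : ℕ) (hm : 0 < m) (hp : 0 < p) (hpm : p ∣ m)
    (heven : Even (m / p)) :
    muG m p n = Gmpn m p n :=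
  stmt12_general m p n heven
end
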